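/- Let η be a symmetric nondegenerate N×N complex matrix and K = η∂_x. Let ḡ_{α,d} ∈ Λ̂_N^{[0]}, d ≥ 0, be pairwise commuting local functionals with ḡ_{1,0} generating spatial translations, and suppose, with the convention ḡ_{α,−1} := ∫ η_{αμ}u^μ dx, that ∂ḡ_{α,d+1}/∂u^1 = ḡ_{α,d} for all d ≥ −1. Set h_{α,p} := δḡ_{α,p+1}/δu^1 for p ≥ −1 (these form a tau-structure), and let Ω_{α,p;β,q} be its two-point functions, with the convention Ω_{α,p;β,q} := 0 if p < 0 or q < 0. Then: (i) ∂h_{α,d}/∂u^1 = h_{α,d−1} for all d ≥ 0; (ii) for all p,q ≥ 0 the expression ∂Ω_{α,p;β,q}/∂u^1 − Ω_{α,p−1;β,q} − Ω_{α,p;β,q−1} is a constant (an element of ℂ[[ε]]), equal to (∂Ω_{α,p;β,q}/∂u^1)|_{u^*_*=0}. -/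

import Mathlib

/-!
Common formal framework for the theory of differential polynomials, local
functionals and tau-structures, following Buryak–Dubrovin–Guéré–Rossi.

Variables of the algebra of differential polynomials: `Sum.inl (α, i)` stands
for `u^α_i` (with `u^α = u^α_0`) and `Sum.inr ()` stands for `ε`.  The paper's
index `1` (the unit direction) corresponds to `(0 : Fin N)` here.
-/

/-- The variables of the algebra of differential polynomials. -/
abbrev DVar (N : ℕ) : Type := (Fin N × ℕ) ⊕ Unit

/-- The ring `Â_N` of (extended) differential polynomials, realized inside the
ring of formal power series in the variables `u^α_i` and `ε`. -/
abbrev DP (N : ℕ) : Type := MvPowerSeries (DVar N) ℂ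

namespace DP

variable {N : ℕ}

/-- Coefficient of a monomial. -/
noncomputable def co (f : DP N) (m : DVar N →₀ ℕ) : ℂ :=
  MvPowerSeries.coeff m f

/-- Build a power series from its coefficients. -/
def ofCo (F : (DVar N →₀ ℕ) → ℂ) : DP N := F

/-- The variable `u^α_i`. -/
noncomputable def uv (α : Fin N) (i : ℕ) : DP N :=
  MvPowerSeries.X (Sum.inl (α, i))

/-- The variable `ε`. -/
noncomputable def eps : DP N := MvPowerSeries.X (Sum.inr ())

/-- The partial derivative `∂/∂v` with respect to one of the variables. -/
noncomputable def pd (v : DVar N) (f : DP N) : DP N :=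
  ofCo fun m => ((m v : ℂ) + 1) * co f (m + Finsupp.single v 1)

/-- The spatial derivative `∂_x = Σ_{α,i} u^α_{i+1} ∂/∂u^α_i`. -/
noncomputable def dx (f : DP N) : DP N :=
  ofCo fun m =>
    ∑ v ∈ m.support,
      (match v with
        | Sum.inl (α, i + 1) =>
            co (pd (Sum.inl (α, i)) f) (m - Finsupp.single (Sum.inl (α, i + 1)) 1)
        | _ => (0 : ℂ))

/-- The variational derivative `δ/δu^μ = Σ_{i≥0} (−∂_x)^i ∘ ∂/∂u^μ_i`. -/
noncomputable def vd (μ : Fin N) (f : DP N) : DP N :=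
  ofCo fun m => ∑ᶠ i : ℕ, ((-1 : ℂ) ^ i) * co (dx^[i] (pd (Sum.inl (μ, i)) f)) m

/-- The weighted degree of a monomial: `deg u^α_i = i`, `deg ε = −1`. -/
noncomputable def wdeg (m : DVar N →₀ ℕ) : ℤ :=
  ∑ v ∈ m.support,
    (match v with
      | Sum.inl (_, i) => (i : ℤ)
      | Sum.inr _ => (-1 : ℤ)) * (m v : ℤ)

/-- Degree-`k` homogeneity (membership in `Â_N^{[k]}`). -/
def IsHomog (k : ℤ) (f : DP N) : Prop :=
  ∀ m, co f m ≠ 0 → wdeg m = k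

/-- Being a constant, i.e. an element of `ℂ[[ε]]`. -/
def IsConst (f : DP N) : Prop :=
  ∀ m, co f m ≠ 0 → ∀ v ∈ m.support, v = Sum.inr ()

/-- Vanishing of the evaluation at `u^*_* = 0`. -/
def VanishAtU0 (f : DP N) : Prop :=
  ∀ k : ℕ, co f (Finsupp.single (Sum.inr ()) k) = 0

/-- Being a genuine differential polynomial: in each ε-degree at most `e`,
polynomiality (bounded degree, boundedly many variables) in the jet
variables `u^α_i`, `i ≥ 1`. -/
def IsDiffPoly (f : DP N) : Prop :=
  ∀ e : ℕ, ∃ D : ℕ, ∀ m, co f m ≠ 0 → m (Sum.inr ()) ≤ e →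
    ((∑ v ∈ m.support,
        (match v with
          | Sum.inl (_, _ + 1) => m v
          | _ => 0)) ≤ D) ∧
      ∀ (α : Fin N) (i : ℕ), D < i → m (Sum.inl (α, i)) = 0

/-- The submodule of constants `ℂ[[ε]] ⊆ Â_N`. -/
noncomputable def constSub (N : ℕ) : Submodule ℂ (DP N) where
  carrier := {f | IsConst f}
  add_mem' := by
    intro f g hf hg m hm
    have hco : co (f + g) m = co f m + co g m := map_add _ _ _
    by_cases h1 : co f m = 0
    · have h2 : co g m ≠ 0 := by
        intro h2; exact hm (by rw [hco, h1, h2, add_zero])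
      exact hg m h2
    · exact hf m h1
  zero_mem' := by
    intro m hm
    exact (hm (map_zero (MvPowerSeries.coeff (R := ℂ) m))).elim
  smul_mem' := by
    intro c f hf m hm
    have hne : co f m ≠ 0 := by
      intro h
      apply hm
      have hsm : co (c • f) m = c * co f m := by
        simp [co]
      rw [hsm, h, mul_zero]
    exact hf m hne

/-- The submodule `ℂ[[ε]] + ∂_x(Â_N)` by which one quotients to get local
functionals. -/
noncomputable def lfSub (N : ℕ) : Submodule ℂ (DP N) :=
  constSub N ⊔ Submodule.span ℂ (Set.range (dx : DP N → DP N))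

/-- The space `Λ̂_N` of local functionals. -/
abbrev LF (N : ℕ) := DP N ⧸ lfSub N

/-- The projection `f ↦ ∫ f dx`. -/
noncomputable def intg : DP N →ₗ[ℂ] LF N := (lfSub N).mkQ

/-- A choice of density for a local functional. -/
noncomputable def rep (h : LF N) : DP N :=
  (Submodule.Quotient.mk_surjective (lfSub N) h).choose

/-- The variational derivative `δ/δu^μ` of a local functional. -/
noncomputable def vdQ (μ : Fin N) (h : LF N) : DP N := vd μ (rep h)

/-- The partial derivative `∂/∂v` of a local functional. -/
noncomputable def pdQ (v : DVar N) (h : LF N) : LF N := intg (pd v (rep h))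

/-- The degree-`k` local functionals `Λ̂_N^{[k]}`. -/
noncomputable def LFHomog (N : ℕ) (k : ℤ) : Set (LF N) :=
  intg '' {f : DP N | IsHomog k f ∧ IsDiffPoly f}

/-- The operator `K = η ∂_x` applied to a tuple of differential polynomials. -/
noncomputable def etaAp (η : Matrix (Fin N) (Fin N) ℂ) (α : Fin N)
    (g : Fin N → DP N) : DP N :=
  ∑ ν : Fin N, η α ν • dx (g ν)

/-- The bracket `{f̄, ḡ}_{η∂_x}` of local functionals. -/
noncomputable def lfbEta (η : Matrix (Fin N) (Fin N) ℂ) (f g : LF N) : LF N :=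
  intg (∑ μ : Fin N, vdQ μ f * etaAp η μ fun ν => vdQ ν g)

/-- The bracket `{f, h̄}_{η∂_x}` of a differential polynomial with a local
functional. -/
noncomputable def pbEta (η : Matrix (Fin N) (Fin N) ℂ) (f : DP N) (h : LF N) : DP N :=
  ofCo fun m => ∑ γ : Fin N, ∑ᶠ n : ℕ,
    co (pd (Sum.inl (γ, n)) f * dx^[n] (etaAp η γ fun μ => vdQ μ h)) m

/-- A general operator `K^{γν} = Σ_j K^{γν}_j ∂_x^j` applied to a tuple of
differential polynomials. -/
noncomputable def Kap (K : Fin N → Fin N → ℕ → DP N) (γ : Fin N)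
    (g : Fin N → DP N) : DP N :=
  ∑ ν : Fin N, ofCo fun m => ∑ᶠ j : ℕ, co (K γ ν j * dx^[j] (g ν)) m

/-- The bracket `{f̄, ḡ}_K` of local functionals. -/
noncomputable def lfbK (K : Fin N → Fin N → ℕ → DP N) (f g : LF N) : LF N :=
  intg (∑ μ : Fin N, vdQ μ f * Kap K μ fun ν => vdQ ν g)

/-- The bracket `{f, h̄}_K` of a differential polynomial with a local
functional. -/
noncomputable def pbK (K : Fin N → Fin N → ℕ → DP N) (f : DP N) (h : LF N) : DP N :=
  ofCo fun m => ∑ γ : Fin N, ∑ᶠ n : ℕ,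
    co (pd (Sum.inl (γ, n)) f * dx^[n] (Kap K γ fun μ => vdQ μ h)) m

/-- Being a hamiltonian operator. -/
structure IsHamOp (K : Fin N → Fin N → ℕ → DP N) : Prop where
  finite : ∀ γ ν, ∃ J : ℕ, ∀ j, J ≤ j → K γ ν j = 0
  deg : ∀ (γ ν : Fin N) (j : ℕ), IsHomog (1 - (j : ℤ)) (K γ ν j)
  poly : ∀ γ ν j, IsDiffPoly (K γ ν j)
  antisym : ∀ f g : LF N, lfbK K f g = -lfbK K g f
  jacobi : ∀ f g h : LF N,
    lfbK K (lfbK K f g) h + lfbK K (lfbK K g h) f + lfbK K (lfbK K h f) g = 0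

/-- A hamiltonian hierarchy: a hamiltonian operator together with pairwise
commuting Hamiltonians `h̄_{β,q} ∈ Λ̂^{[0]}_N` such that `h̄_{1,0}` generates the
spatial translations. -/
structure IsHierarchy [NeZero N] (K : Fin N → Fin N → ℕ → DP N)
    (H : Fin N → ℕ → LF N) : Prop where
  ham : IsHamOp K
  mem : ∀ β q, H β q ∈ LFHomog N 0
  comm : ∀ β q γ p, lfbK K (H β q) (H γ p) = 0
  transl : ∀ α, Kap K α (fun μ => vdQ μ (H 0 0)) = uv α 1

/-- A tau-structure for a hamiltonian hierarchy.  Here `h β q` denotes the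
tau-symmetric density `h_{β,q-1}` (an index shift by one). -/
structure IsTauStructure [NeZero N] (K : Fin N → Fin N → ℕ → DP N)
    (H : Fin N → ℕ → LF N) (h : Fin N → ℕ → DP N) : Prop where
  mem : ∀ β q, IsHomog 0 (h β q) ∧ IsDiffPoly (h β q)
  casimir : ∀ β α, Kap K α (fun μ => vdQ μ (intg (h β 0))) = 0
  indep : LinearIndependent ℂ fun β : Fin N => intg (h β 0)
  nondeg : Matrix.det (Matrix.of fun α β : Fin N => co (K α β 1) 0) ≠ 0
  dens : ∀ β q, intg (h β (q + 1)) = H β q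
  tausym : ∀ α β p q, pbK K (h α p) (H β q) = pbK K (h β q) (H α p)

end DP

/-!
`∂/∂u^1` commutes with `∂_x` and with the variational derivatives, which kill constants and
`∂_x`-images and therefore descend to local functionals. So `∂ḡ_{α,d+1}/∂u^1 = ḡ_{α,d}` passes
to `δḡ/δu^ν`, giving (i) and lowering the second index of the bracket as well. By the Leibniz
rule, `∂_x(∂Ω_{α,p;β,q}/∂u^1) = ∂_x(Ω_{α,p−1;β,q} + Ω_{α,p;β,q−1})`, the bottom indices
producing constants on which the bracket vanishes. Since the kernel of `∂_x` consists of the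
constants `ℂ[[ε]]`, this is (ii); the value at `u^*_* = 0` follows because the `Ω` vanish there.
-/
namespace DP

variable {N : ℕ}

@[simp] lemma co_ofCo (F : (DVar N →₀ ℕ) → ℂ) (m : DVar N →₀ ℕ) : co (ofCo F) m = F m := rfl

lemma ext_co {f g : DP N} (h : ∀ m, co f m = co g m) : f = g := MvPowerSeries.ext h

@[simp] lemma co_zero (m : DVar N →₀ ℕ) : co (0 : DP N) m = 0 := rfl

@[simp] lemma co_add (f g : DP N) (m : DVar N →₀ ℕ) : co (f + g) m = co f m + co g m := rfl

@[simp] lemma co_sub (f g : DP N) (m : DVar N →₀ ℕ) : co (f - g) m = co f m - co g m :=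
  map_sub (MvPowerSeries.coeff m) f g

@[simp] lemma co_smul (c : ℂ) (f : DP N) (m : DVar N →₀ ℕ) : co (c • f) m = c * co f m := rfl

lemma co_one (m : DVar N →₀ ℕ) : co (1 : DP N) m = if m = 0 then 1 else 0 :=
  MvPowerSeries.coeff_one m

lemma co_pd (v : DVar N) (f : DP N) (m : DVar N →₀ ℕ) :
    co (pd v f) m = ((m v : ℂ) + 1) * co f (m + Finsupp.single v 1) := rfl

lemma pd_eq_pderiv (v : DVar N) (f : DP N) : pd v f = MvPowerSeries.pderiv ℂ v f :=
  ext_co fun m => by rw [co_pd, co, co, MvPowerSeries.coeff_pderiv, mul_comm]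

lemma pd_add (v : DVar N) (f g : DP N) : pd v (f + g) = pd v f + pd v g := by
  simp only [pd_eq_pderiv, map_add]

lemma pd_smul (v : DVar N) (c : ℂ) (f : DP N) : pd v (c • f) = c • pd v f := by
  simp only [pd_eq_pderiv, Derivation.map_smul]

lemma pd_mul (v : DVar N) (f g : DP N) : pd v (f * g) = pd v f * g + f * pd v g := by
  simp only [pd_eq_pderiv, Derivation.leibniz, smul_eq_mul]; ring

lemma pd_sum (v : DVar N) {ι : Type*} (s : Finset ι) (F : ι → DP N) :
    pd v (∑ i ∈ s, F i) = ∑ i ∈ s, pd v (F i) := by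
  simp only [pd_eq_pderiv, map_sum]

lemma pd_uv (w : DVar N) (α : Fin N) (i : ℕ) :
    pd w (uv α i) = if Sum.inl (α, i) = w then 1 else 0 := by
  classical
  rw [pd_eq_pderiv, uv, MvPowerSeries.pderiv_X, Pi.single_apply]

lemma pd_comm (a b : DVar N) (f : DP N) : pd a (pd b f) = pd b (pd a f) := by
  refine ext_co fun m => ?_
  simp only [co_pd, Finsupp.add_apply, Finsupp.single_apply, add_right_comm m]
  by_cases h : a = b
  · subst h; ring
  · simp only [h, Ne.symm h, if_false]; push_cast; ring

lemma isConst_one : IsConst (1 : DP N) := by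
  intro m hm v hv
  rw [co_one] at hm
  split_ifs at hm with h
  · simp [h] at hv
  · exact absurd rfl hm

lemma isConst_smul (c : ℂ) {f : DP N} (h : IsConst f) : IsConst (c • f) :=
  (constSub N).smul_mem c h

lemma pd_inl_of_isConst {f : DP N} (hf : IsConst f) (a : Fin N × ℕ) : pd (Sum.inl a) f = 0 := by
  refine ext_co fun m => ?_
  rw [co_pd, co_zero, mul_eq_zero]
  by_contra! h
  have := hf _ h.2 (Sum.inl a) (by simp)
  exact Sum.inl_ne_inr this

def level : DVar N → ℕ
  | Sum.inl (_, i) => i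
  | Sum.inr _ => 0

lemma weight_add_single (m : DVar N →₀ ℕ) (v : DVar N) :
    Finsupp.weight level (m + Finsupp.single v 1) = Finsupp.weight level m + level v := by
  rw [map_add, Finsupp.weight_single, one_smul]

lemma weight_sub_single {m : DVar N →₀ ℕ} {v : DVar N} (h : m v ≠ 0) :
    Finsupp.weight level (m - Finsupp.single v 1) + level v = Finsupp.weight level m := by
  rw [← weight_add_single, Finsupp.sub_add_single_one_cancel h]

lemma add_single_sub_single_comm (m : DVar N →₀ ℕ) {u v : DVar N} (h : u ≠ v) :
    m + Finsupp.single v 1 - Finsupp.single u 1 = m - Finsupp.single u 1 + Finsupp.single v 1 := by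
  ext w
  simp only [Finsupp.add_apply, Finsupp.tsub_apply, Finsupp.single_apply]
  by_cases hu : u = w
  · subst hu; simp [Ne.symm h]
  · simp [hu]

noncomputable def dxTerm (f : DP N) (m : DVar N →₀ ℕ) : DVar N → ℂ
  | Sum.inl (α, i + 1) =>
      co (pd (Sum.inl (α, i)) f) (m - Finsupp.single (Sum.inl (α, i + 1)) 1)
  | _ => 0

@[simp] lemma dxTerm_inl_zero (f : DP N) (m : DVar N →₀ ℕ) (α : Fin N) :
    dxTerm f m (Sum.inl (α, 0)) = 0 := rfl

lemma dxTerm_inl_succ (f : DP N) (m : DVar N →₀ ℕ) (α : Fin N) (i : ℕ) :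
    dxTerm f m (Sum.inl (α, i + 1))
      = co (pd (Sum.inl (α, i)) f) (m - Finsupp.single (Sum.inl (α, i + 1)) 1) := rfl

@[simp] lemma dxTerm_inr (f : DP N) (m : DVar N →₀ ℕ) (u : Unit) :
    dxTerm f m (Sum.inr u) = 0 := rfl

lemma co_dx (f : DP N) (m : DVar N →₀ ℕ) : co (dx f) m = ∑ v ∈ m.support, dxTerm f m v :=
  Finset.sum_congr rfl fun v _ => by rcases v with ⟨α, _ | i⟩ | u <;> rfl

noncomputable def dxLin : DP N →ₗ[ℂ] DP N where
  toFun := dx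
  map_add' f g := ext_co fun m => by
    simp only [co_add, co_dx, ← Finset.sum_add_distrib]
    refine Finset.sum_congr rfl fun v _ => ?_
    rcases v with ⟨α, _ | i⟩ | u <;> simp [dxTerm_inl_succ, pd_add]
  map_smul' c f := ext_co fun m => by
    simp only [co_smul, co_dx, Finset.mul_sum, RingHom.id_apply]
    refine Finset.sum_congr rfl fun v _ => ?_
    rcases v with ⟨α, _ | i⟩ | u <;> simp [dxTerm_inl_succ, pd_smul]

lemma dx_iterate_eq (n : ℕ) (f : DP N) : dx^[n] f = (dxLin ^ n) f :=
  (Module.End.pow_apply dxLin n f).symm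

lemma dx_sub (f g : DP N) : dx (f - g) = dx f - dx g := dxLin.map_sub f g

lemma dx_zero : dx (0 : DP N) = 0 := dxLin.map_zero

lemma dx_iterate_add (n : ℕ) (f g : DP N) : dx^[n] (f + g) = dx^[n] f + dx^[n] g := by
  simp only [dx_iterate_eq, map_add]

lemma dx_iterate_zero (n : ℕ) : dx^[n] (0 : DP N) = 0 := by
  rw [dx_iterate_eq, map_zero]

lemma dx_of_isConst {f : DP N} (hf : IsConst f) : dx f = 0 := by
  refine ext_co fun m => ?_
  rw [co_dx, co_zero]
  refine Finset.sum_eq_zero fun v _ => ?_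
  rcases v with ⟨α, _ | i⟩ | u
  · rfl
  · rw [dxTerm_inl_succ, pd_inl_of_isConst hf, co_zero]
  · rfl

/-- `∂_x` raises the weight by one. -/
lemma co_dx_iterate_eq_zero {n : ℕ} (g : DP N) {m : DVar N →₀ ℕ}
    (h : Finsupp.weight level m < n) : co (dx^[n] g) m = 0 := by
  induction n generalizing g m with
  | zero => omega
  | succ n ih =>
    rw [Function.iterate_succ_apply', co_dx]
    refine Finset.sum_eq_zero fun v hv => ?_
    rcases v with ⟨α, _ | j⟩ | u
    · rfl
    · rw [dxTerm_inl_succ, co_pd, ih, mul_zero]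
      have := weight_sub_single (Finsupp.mem_support_iff.mp hv)
      rw [weight_add_single]
      simp only [level] at this ⊢
      omega
    · rfl

lemma co_mul_dx_iterate_eq_zero {n : ℕ} (f g : DP N) {m : DVar N →₀ ℕ}
    (h : Finsupp.weight level m < n) : co (f * dx^[n] g) m = 0 := by
  rw [co, MvPowerSeries.coeff_mul]
  refine Finset.sum_eq_zero fun p hp => ?_
  rw [Finset.HasAntidiagonal.mem_antidiagonal] at hp
  have : Finsupp.weight level p.2 ≤ Finsupp.weight level m := by
    rw [← hp, map_add]; omega
  exact mul_eq_zero_of_right _ (co_dx_iterate_eq_zero g (by omega))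

lemma support_add_single (m : DVar N →₀ ℕ) (v : DVar N) :
    (m + Finsupp.single v 1).support = insert v m.support := by
  ext u
  by_cases h : v = u
  · subst h; simp
  · simp [Ne.symm h]

lemma co_dx_eq_add_sum_erase (g : DP N) (m : DVar N →₀ ℕ) (v : DVar N) :
    co (dx g) m = (if m v ≠ 0 then dxTerm g m v else 0)
      + ∑ u ∈ m.support.erase v, dxTerm g m u := by
  rw [co_dx]
  split_ifs with h
  · exact (Finset.add_sum_erase _ _ (Finsupp.mem_support_iff.mpr h)).symm
  · rw [zero_add, Finset.erase_eq_of_notMem (by simpa using h)]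

lemma mul_dxTerm_add_single {f : DP N} {m : DVar N →₀ ℕ} {u v : DVar N} (h : u ≠ v) :
    ((m v : ℂ) + 1) * dxTerm f (m + Finsupp.single v 1) u = dxTerm (pd v f) m u := by
  rcases u with ⟨β, _ | j⟩ | w
  · simp
  · rw [dxTerm_inl_succ, dxTerm_inl_succ, add_single_sub_single_comm _ h, pd_comm, co_pd v,
      Finsupp.tsub_apply, Finsupp.single_apply, if_neg h, tsub_zero]
  · simp

lemma co_pd_dx (v : DVar N) (f : DP N) (m : DVar N →₀ ℕ) :
    co (pd v (dx f)) m = ((m v : ℂ) + 1) * dxTerm f (m + Finsupp.single v 1) v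
      + ∑ u ∈ m.support.erase v, dxTerm (pd v f) m u := by
  rw [co_pd, co_dx, support_add_single, ← Finset.add_sum_erase _ _ (Finset.mem_insert_self v _),
    Finset.erase_insert_eq_erase, mul_add, Finset.mul_sum]
  congr 1
  exact Finset.sum_congr rfl fun u hu => mul_dxTerm_add_single (Finset.ne_of_mem_erase hu)

lemma pd_inl_zero_dx (α : Fin N) (f : DP N) :
    pd (Sum.inl (α, 0)) (dx f) = dx (pd (Sum.inl (α, 0)) f) :=
  ext_co fun m => by
    rw [co_pd_dx, co_dx_eq_add_sum_erase _ _ (Sum.inl (α, 0))]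
    simp

lemma pd_inl_succ_dx (α : Fin N) (i : ℕ) (f : DP N) :
    pd (Sum.inl (α, i + 1)) (dx f)
      = dx (pd (Sum.inl (α, i + 1)) f) + pd (Sum.inl (α, i)) f := by
  set v : DVar N := Sum.inl (α, i + 1)
  refine ext_co fun m => ?_
  have hdiag : dxTerm f (m + Finsupp.single v 1) v = co (pd (Sum.inl (α, i)) f) m := by
    rw [dxTerm_inl_succ, add_tsub_cancel_right]
  have hdiag' : (if m v ≠ 0 then dxTerm (pd v f) m v else 0)
      = (m v : ℂ) * co (pd (Sum.inl (α, i)) f) m := by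
    split_ifs with hm
    · rw [dxTerm_inl_succ, pd_comm, co_pd v, Finsupp.sub_add_single_one_cancel hm,
        Finsupp.tsub_apply, Finsupp.single_apply, if_pos rfl, Nat.cast_sub (by omega)]
      push_cast; ring
    · simp only [not_not] at hm; simp [hm]
  rw [co_pd_dx, co_add, co_dx_eq_add_sum_erase _ _ v, hdiag, hdiag']
  ring

lemma pd_inl_zero_dx_iterate (α : Fin N) (n : ℕ) (f : DP N) :
    pd (Sum.inl (α, 0)) (dx^[n] f) = dx^[n] (pd (Sum.inl (α, 0)) f) := by
  induction n generalizing f with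
  | zero => rfl
  | succ k ih => rw [Function.iterate_succ_apply, Function.iterate_succ_apply, ih, pd_inl_zero_dx]

lemma co_vd (μ : Fin N) (f : DP N) (m : DVar N →₀ ℕ) :
    co (vd μ f) m = ∑ i ∈ Finset.range (Finsupp.weight level m + 1),
      (-1 : ℂ) ^ i * co (dx^[i] (pd (Sum.inl (μ, i)) f)) m := by
  refine finsum_eq_finsetSum_of_support_subset _ fun i hi => ?_
  by_contra hc
  simp only [Finset.coe_range, Set.mem_Iio, not_lt] at hc
  exact hi (mul_eq_zero_of_right _ (co_dx_iterate_eq_zero _ (by omega)))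

noncomputable def vdLin (μ : Fin N) : DP N →ₗ[ℂ] DP N where
  toFun := vd μ
  map_add' f g := ext_co fun m => by
    simp only [co_add, co_vd, ← Finset.sum_add_distrib, pd_add, dx_iterate_eq, map_add, mul_add]
  map_smul' c f := ext_co fun m => by
    simp only [co_smul, co_vd, Finset.mul_sum, pd_smul, dx_iterate_eq, map_smul, RingHom.id_apply]
    exact Finset.sum_congr rfl fun i _ => by ring

/-- The sum defining `δ(∂_x f)/δu^μ` telescopes. -/
lemma vd_dx (μ : Fin N) (f : DP N) : vd μ (dx f) = 0 := by
  refine ext_co fun m => ?_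
  set b : ℕ → ℂ := fun i => (-1 : ℂ) ^ i * co (dx^[i + 1] (pd (Sum.inl (μ, i)) f)) m
  have hsucc : ∀ i, (-1 : ℂ) ^ (i + 1) * co (dx^[i + 1] (pd (Sum.inl (μ, i + 1)) (dx f))) m
      = b (i + 1) - b i := fun i => by
    rw [pd_inl_succ_dx, dx_iterate_add, co_add, ← Function.iterate_succ_apply, pow_succ]
    ring
  rw [co_vd, Finset.sum_range_succ', Finset.sum_congr rfl fun i _ => hsucc i,
    Finset.sum_range_sub, pow_zero, one_mul, Function.iterate_zero_apply, pd_inl_zero_dx]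
  simpa [b] using co_dx_iterate_eq_zero _ (Nat.lt_succ_self _)

lemma vd_of_isConst {f : DP N} (hf : IsConst f) (μ : Fin N) : vd μ f = 0 :=
  ext_co fun m => by simp [co_vd, pd_inl_of_isConst hf, dx_iterate_zero]

lemma lfSub_le_ker_vdLin (μ : Fin N) : lfSub N ≤ LinearMap.ker (vdLin μ) := by
  refine sup_le (fun f hf => vd_of_isConst hf μ) ?_
  rw [Submodule.span_le]
  rintro _ ⟨f, rfl⟩
  exact vd_dx μ f

lemma vdQ_intg (μ : Fin N) (f : DP N) : vdQ μ (intg f) = vd μ f := by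
  have hrep : rep (intg f) - f ∈ lfSub N :=
    (Submodule.Quotient.eq _).mp (Submodule.Quotient.mk_surjective (lfSub N) (intg f)).choose_spec
  have := lfSub_le_ker_vdLin μ hrep
  rwa [LinearMap.mem_ker, map_sub, sub_eq_zero] at this

lemma pd_inl_zero_vd (α μ : Fin N) (f : DP N) :
    pd (Sum.inl (α, 0)) (vd μ f) = vd μ (pd (Sum.inl (α, 0)) f) := by
  refine ext_co fun m => ?_
  have hw : Finsupp.weight level (m + Finsupp.single (Sum.inl (α, 0)) 1) = Finsupp.weight level m :=
    weight_add_single m _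
  rw [co_pd, co_vd, co_vd, hw, Finset.mul_sum]
  refine Finset.sum_congr rfl fun i _ => ?_
  rw [mul_left_comm, ← co_pd, pd_inl_zero_dx_iterate, pd_comm]

lemma pd_inl_zero_vdQ (α μ : Fin N) (G : LF N) :
    pd (Sum.inl (α, 0)) (vdQ μ G) = vdQ μ (pdQ (Sum.inl (α, 0)) G) := by
  rw [pdQ, vdQ_intg, vdQ, pd_inl_zero_vd]

lemma vd_uv_zero (ν μ : Fin N) : vd ν (uv μ 0) = if μ = ν then 1 else 0 := by
  refine ext_co fun m => ?_
  rw [co_vd, Finset.sum_eq_single_of_mem 0 (by simp)]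
  · simp [pd_uv, apply_ite (co · m)]
  · intro i _ hi
    simp [pd_uv, Ne.symm hi, dx_iterate_zero]

lemma vd_sum_smul_uv_zero (ν : Fin N) (c : Fin N → ℂ) :
    vd ν (∑ μ, c μ • uv μ 0) = c ν • 1 := by
  change vdLin ν _ = _
  simp only [map_sum, map_smul]
  simp [vdLin, vd_uv_zero]

lemma exists_monomial_of_max_order {f : DP N} {m₀ : DVar N →₀ ℕ} {α₀ : Fin N} {i₀ : ℕ}
    (hm₀ : co f m₀ ≠ 0) (hi₀ : m₀ (Sum.inl (α₀, i₀)) ≠ 0) :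
    ∃ (m : DVar N →₀ ℕ) (γ : Fin N) (n : ℕ), co f m ≠ 0 ∧ m (Sum.inl (γ, n)) ≠ 0 ∧
      ∀ μ, co f μ ≠ 0 → Finsupp.weight level μ = Finsupp.weight level m →
        μ (Sum.inl (γ, n + 1)) = 0 := by
  classical
  set w₀ := Finsupp.weight level m₀
  let P : ℕ → Prop := fun k =>
    ∃ m, co f m ≠ 0 ∧ Finsupp.weight level m = w₀ ∧ ∃ γ, m (Sum.inl (γ, k)) ≠ 0
  have hle : ∀ k, P k → k ≤ w₀ := by
    rintro k ⟨m, -, hw, γ, hγ⟩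
    exact hw ▸ Finsupp.le_weight_of_ne_zero' level hγ
  have hP₀ : P i₀ := ⟨m₀, hm₀, rfl, α₀, hi₀⟩
  obtain ⟨m, hm, hw, γ, hγ⟩ := Nat.findGreatest_spec (hle i₀ hP₀) hP₀
  refine ⟨m, γ, _, hm, hγ, fun μ hμ hwμ => ?_⟩
  by_contra h
  have hPμ : P _ := ⟨μ, hμ, hwμ.trans hw, γ, h⟩
  exact Nat.findGreatest_is_greatest (Nat.lt_succ_self _) (hle _ hPμ) hPμ

/-- Raising the order of one factor `u^γ_n` of `m` to `u^γ_{n+1}` gives a monomial that `∂_x`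
can only reach from `m`, provided no monomial of `f` of the same weight contains `u^γ_{n+1}`. -/
lemma co_dx_raise_order {f : DP N} {m : DVar N →₀ ℕ} {γ : Fin N} {n : ℕ}
    (hm : co f m ≠ 0) (hn : m (Sum.inl (γ, n)) ≠ 0)
    (hmax : ∀ μ, co f μ ≠ 0 → Finsupp.weight level μ = Finsupp.weight level m →
      μ (Sum.inl (γ, n + 1)) = 0) :
    co (dx f) (m - Finsupp.single (Sum.inl (γ, n)) 1 + Finsupp.single (Sum.inl (γ, n + 1)) 1)
      = m (Sum.inl (γ, n)) * co f m := by
  set u : DVar N := Sum.inl (γ, n + 1)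
  set m' := m - Finsupp.single (Sum.inl (γ, n)) 1 + Finsupp.single u 1
  have hne : (Sum.inl (γ, n) : DVar N) ≠ u := by simp [u]
  have hm'u : m' u = 1 := by
    simp [m', hne, hmax m hm rfl]
  have hwm' : Finsupp.weight level m' = Finsupp.weight level m + 1 := by
    have := weight_sub_single hn
    rw [weight_add_single]
    simp only [level, u] at this ⊢
    omega
  have hother : ∀ w ∈ m'.support, w ≠ u → dxTerm f m' w = 0 := by
    rintro (⟨β, _ | j⟩ | _) hw hwu
    · rfl
    · rw [dxTerm_inl_succ, co_pd, mul_eq_zero]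
      right
      by_contra hμ
      have hw' := weight_sub_single (Finsupp.mem_support_iff.mp hw)
      refine absurd (hmax _ hμ ?_) ?_
      · rw [weight_add_single]; simp only [level] at hw' ⊢; omega
      · simp [Finsupp.single_apply, Ne.symm hwu, hm'u]
    · rfl
  rw [co_dx, Finset.sum_eq_single_of_mem u (by simp [hm'u]) hother, dxTerm_inl_succ,
    add_tsub_cancel_right, co_pd, Finsupp.sub_add_single_one_cancel hn, Finsupp.tsub_apply,
    Finsupp.single_apply, if_pos rfl, Nat.cast_sub (Nat.one_le_iff_ne_zero.mpr hn)]
  push_cast; ring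

lemma isConst_of_dx_eq_zero {f : DP N} (h : dx f = 0) : IsConst f := by
  rintro m₀ hm₀ (⟨α₀, i₀⟩ | ⟨⟩) hv
  · obtain ⟨m, γ, n, hm, hn, hmax⟩ :=
      exists_monomial_of_max_order hm₀ (Finsupp.mem_support_iff.mp hv)
    have := co_dx_raise_order hm hn hmax
    rw [h, co_zero, eq_comm, mul_eq_zero, Nat.cast_eq_zero] at this
    exact absurd this (not_or.mpr ⟨hn, hm⟩)
  · rfl

/-- The bracket `{f, ·}_{η∂_x}` evaluated on an arbitrary tuple `g` in place of the
variational derivatives `δh̄/δu^ν`. -/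
noncomputable def pbEtaVec (η : Matrix (Fin N) (Fin N) ℂ) (f : DP N) (g : Fin N → DP N) :
    DP N :=
  ofCo fun m => ∑ γ : Fin N, ∑ᶠ n : ℕ,
    co (pd (Sum.inl (γ, n)) f * dx^[n] (etaAp η γ g)) m

lemma pbEta_eq_pbEtaVec (η : Matrix (Fin N) (Fin N) ℂ) (f : DP N) (h : LF N) :
    pbEta η f h = pbEtaVec η f fun ν => vdQ ν h := rfl

lemma co_pbEtaVec (η : Matrix (Fin N) (Fin N) ℂ) (f : DP N) (g : Fin N → DP N)
    (m : DVar N →₀ ℕ) :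
    co (pbEtaVec η f g) m = ∑ γ : Fin N, ∑ n ∈ Finset.range (Finsupp.weight level m + 1),
      co (pd (Sum.inl (γ, n)) f * dx^[n] (etaAp η γ g)) m := by
  rw [pbEtaVec, co_ofCo]
  refine Finset.sum_congr rfl fun γ _ => ?_
  refine finsum_eq_finsetSum_of_support_subset _ fun n hn => ?_
  by_contra hc
  simp only [Finset.coe_range, Set.mem_Iio, not_lt] at hc
  exact hn (co_mul_dx_iterate_eq_zero _ _ (by omega))

lemma pd_inl_zero_etaAp (α : Fin N) (η : Matrix (Fin N) (Fin N) ℂ) (γ : Fin N)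
    (g : Fin N → DP N) :
    pd (Sum.inl (α, 0)) (etaAp η γ g) = etaAp η γ fun ν => pd (Sum.inl (α, 0)) (g ν) := by
  simp only [etaAp, pd_sum, pd_smul, pd_inl_zero_dx]

lemma pd_inl_zero_pbEtaVec (α : Fin N) (η : Matrix (Fin N) (Fin N) ℂ) (f : DP N)
    (g : Fin N → DP N) :
    pd (Sum.inl (α, 0)) (pbEtaVec η f g)
      = pbEtaVec η (pd (Sum.inl (α, 0)) f) g
        + pbEtaVec η f fun ν => pd (Sum.inl (α, 0)) (g ν) := by
  refine ext_co fun m => ?_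
  rw [co_pd, co_add, co_pbEtaVec, co_pbEtaVec, co_pbEtaVec, weight_add_single, Finset.mul_sum,
    ← Finset.sum_add_distrib]
  refine Finset.sum_congr rfl fun γ _ => ?_
  rw [Finset.mul_sum, ← Finset.sum_add_distrib]
  refine Finset.sum_congr rfl fun n _ => ?_
  rw [← co_pd, pd_mul, co_add, pd_comm, pd_inl_zero_dx_iterate, pd_inl_zero_etaAp]

lemma pbEtaVec_of_isConst_left (η : Matrix (Fin N) (Fin N) ℂ) {f : DP N} (hf : IsConst f)
    (g : Fin N → DP N) : pbEtaVec η f g = 0 :=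
  ext_co fun m => by simp [co_pbEtaVec, pd_inl_of_isConst hf]

lemma pbEtaVec_of_isConst_right (η : Matrix (Fin N) (Fin N) ℂ) (f : DP N) {g : Fin N → DP N}
    (hg : ∀ ν, IsConst (g ν)) : pbEtaVec η f g = 0 :=
  ext_co fun m => by simp [co_pbEtaVec, etaAp, dx_of_isConst (hg _), dx_iterate_zero]

lemma dx_pd_sub_lower_eq_zero (α : Fin N) (η : Matrix (Fin N) (Fin N) ℂ) {a : ℕ → DP N}
    {b : ℕ → Fin N → DP N} {W : ℕ → ℕ → DP N}
    (hW : ∀ p q, dx (W p q) = pbEtaVec η (a p) (b q))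
    (ha : ∀ p, pd (Sum.inl (α, 0)) (a (p + 1)) = a p) (ha₀ : IsConst (pd (Sum.inl (α, 0)) (a 0)))
    (hb : ∀ q ν, pd (Sum.inl (α, 0)) (b (q + 1) ν) = b q ν)
    (hb₀ : ∀ ν, IsConst (pd (Sum.inl (α, 0)) (b 0 ν))) (p q : ℕ) :
    dx (pd (Sum.inl (α, 0)) (W p q) - (if p = 0 then 0 else W (p - 1) q)
      - (if q = 0 then 0 else W p (q - 1))) = 0 := by
  have hA : pbEtaVec η (pd (Sum.inl (α, 0)) (a p)) (b q)
      = dx (if p = 0 then 0 else W (p - 1) q) := by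
    cases p with
    | zero => rw [if_pos rfl, dx_zero, pbEtaVec_of_isConst_left η ha₀]
    | succ p => rw [if_neg p.succ_ne_zero, p.add_sub_cancel, ha, hW]
  have hB : pbEtaVec η (a p) (fun ν => pd (Sum.inl (α, 0)) (b q ν))
      = dx (if q = 0 then 0 else W p (q - 1)) := by
    cases q with
    | zero => rw [if_pos rfl, dx_zero, pbEtaVec_of_isConst_right η _ hb₀]
    | succ q => simp only [if_neg q.succ_ne_zero, q.add_sub_cancel, hb, hW]
  rw [dx_sub, dx_sub, ← pd_inl_zero_dx, hW, pd_inl_zero_pbEtaVec, hA, hB]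
  ring

end DP

open DP in
/-- Here `h α p` stands for `h_{α,p−1}` and `W α p β q` for `Ω_{α,p;β,q}`. -/
theorem statement7_general (N : ℕ) [NeZero N] (η : Matrix (Fin N) (Fin N) ℂ)
    (G : Fin N → ℕ → LF N)
    (hder : ∀ α d, pdQ (Sum.inl (0, 0)) (G α (d + 1)) = G α d)
    (hder0 : ∀ α, pdQ (Sum.inl (0, 0)) (G α 0) = intg (∑ μ : Fin N, η α μ • uv μ 0))
    (h : Fin N → ℕ → DP N) (hdef : ∀ α p, h α p = vdQ 0 (G α p))
    (W : Fin N → ℕ → Fin N → ℕ → DP N)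
    (hW : ∀ (α : Fin N) (p : ℕ) (β : Fin N) (q : ℕ),
      (IsHomog 0 (W α p β q) ∧ IsDiffPoly (W α p β q)) ∧
        dx (W α p β q) = pbEta η (h α p) (G β q) ∧ VanishAtU0 (W α p β q)) :
    (∀ (α : Fin N) (d : ℕ), pd (Sum.inl (0, 0)) (h α (d + 1)) = h α d) ∧
    (∀ (α : Fin N) (p : ℕ) (β : Fin N) (q : ℕ),
      IsConst (pd (Sum.inl (0, 0)) (W α p β q)
          - (if p = 0 then 0 else W α (p - 1) β q)
          - (if q = 0 then 0 else W α p β (q - 1))) ∧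
      ∀ k : ℕ,
        co (pd (Sum.inl (0, 0)) (W α p β q)
            - (if p = 0 then 0 else W α (p - 1) β q)
            - (if q = 0 then 0 else W α p β (q - 1)))
          (Finsupp.single (Sum.inr ()) k)
        = co (pd (Sum.inl (0, 0)) (W α p β q)) (Finsupp.single (Sum.inr ()) k)) := by
  have hvd : ∀ β q ν, pd (Sum.inl (0, 0)) (vdQ ν (G β (q + 1))) = vdQ ν (G β q) :=
    fun β q ν => by rw [pd_inl_zero_vdQ, hder]
  have hvd₀ : ∀ β ν, IsConst (pd (Sum.inl (0, 0)) (vdQ ν (G β 0))) := fun β ν => by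
    rw [pd_inl_zero_vdQ, hder0, vdQ_intg, vd_sum_smul_uv_zero]
    exact isConst_smul _ isConst_one
  have hh : ∀ α d, pd (Sum.inl (0, 0)) (h α (d + 1)) = h α d :=
    fun α d => by rw [hdef, hdef, hvd]
  refine ⟨hh, fun α p β q => ⟨isConst_of_dx_eq_zero ?_, fun k => ?_⟩⟩
  · have hdxW : ∀ p q, dx (W α p β q) = pbEtaVec η (h α p) fun ν => vdQ ν (G β q) :=
      fun p q => (hW α p β q).2.1.trans (pbEta_eq_pbEtaVec _ _ _)
    refine dx_pd_sub_lower_eq_zero 0 η hdxW (hh α) ?_ (hvd β) (hvd₀ β) p q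
    rw [hdef]
    exact hvd₀ α 0
  · have hvan : ∀ p' q', co (W α p' β q') (Finsupp.single (Sum.inr ()) k) = 0 :=
      fun p' q' => (hW α p' β q').2.2 k
    split_ifs <;> simp [hvan]

open DP in
/-- string-type equations for the two-point functions of the
double ramification hierarchy.  `K = η∂_x`; `G α d = ḡ_{α,d}` are the
pairwise commuting Hamiltonians, `ḡ_{1,0}` generates spatial translations and
`∂ḡ_{α,d+1}/∂u^1 = ḡ_{α,d}` for `d ≥ −1` (with `ḡ_{α,−1} = ∫ η_{αμ}u^μ dx`,
lower indices here denoting entries of `η` itself).  The densities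
`h_{α,p} := δḡ_{α,p+1}/δu^1` (so `h α p` stands for `h_{α,p−1}`) and their
two-point functions `W α p β q = Ω_{α,p;β,q}` (with `Ω ≡ 0` for a negative
index, rendered by the `if … then 0` clauses) satisfy:
(i) `∂h_{α,d}/∂u^1 = h_{α,d−1}` for all `d ≥ 0`;
(ii) `∂Ω_{α,p;β,q}/∂u^1 − Ω_{α,p−1;β,q} − Ω_{α,p;β,q−1}` is a constant in
`ℂ[[ε]]`, equal to `(∂Ω_{α,p;β,q}/∂u^1)|_{u^*_*=0}`. -/
theorem statement7 (N : ℕ) [NeZero N] (η : Matrix (Fin N) (Fin N) ℂ)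
    (hsym : η.IsSymm) (hnd : IsUnit η.det)
    (G : Fin N → ℕ → LF N)
    (hmem : ∀ α d, G α d ∈ LFHomog N 0)
    (hcomm : ∀ α d β e, lfbEta η (G α d) (G β e) = 0)
    (htransl : ∀ α : Fin N, etaAp η α (fun μ => vdQ μ (G 0 0)) = uv α 1)
    (hder : ∀ α d, pdQ (Sum.inl (0, 0)) (G α (d + 1)) = G α d)
    (hder0 : ∀ α, pdQ (Sum.inl (0, 0)) (G α 0) = intg (∑ μ : Fin N, η α μ • uv μ 0))
    (h : Fin N → ℕ → DP N) (hdef : ∀ α p, h α p = vdQ 0 (G α p))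
    (W : Fin N → ℕ → Fin N → ℕ → DP N)
    (hW : ∀ (α : Fin N) (p : ℕ) (β : Fin N) (q : ℕ),
      (IsHomog 0 (W α p β q) ∧ IsDiffPoly (W α p β q)) ∧
        dx (W α p β q) = pbEta η (h α p) (G β q) ∧ VanishAtU0 (W α p β q)) :
    (∀ (α : Fin N) (d : ℕ), pd (Sum.inl (0, 0)) (h α (d + 1)) = h α d) ∧
    (∀ (α : Fin N) (p : ℕ) (β : Fin N) (q : ℕ),
      IsConst (pd (Sum.inl (0, 0)) (W α p β q)
          - (if p = 0 then 0 else W α (p - 1) β q)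
          - (if q = 0 then 0 else W α p β (q - 1))) ∧
      ∀ k : ℕ,
        co (pd (Sum.inl (0, 0)) (W α p β q)
            - (if p = 0 then 0 else W α (p - 1) β q)
            - (if q = 0 then 0 else W α p β (q - 1)))
          (Finsupp.single (Sum.inr ()) k)
        = co (pd (Sum.inl (0, 0)) (W α p β q)) (Finsupp.single (Sum.inr ()) k)) :=
  statement7_general N η G hder hder0 h hdef W hW
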